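/- arXiv:1810.07636 — 4 statements merged into one kernel-verified Lean document; each statement's English description precedes it below -/
import Mathlib

section
/- For every compactly supported smooth function φ : ℝ → ℝ, the function F(R) := ∫_ℝ χ♯(R,u)·φ(u) du is differentiable at every R ∈ ℝ, with F′(R) = (1/2)·e^{R/2}·(φ(R) + φ(−R)) + (1/2)·sgn(R)·e^{R/2}·∫_{|u|<|R|} ( (1/2)·f(u² − R²) − 2R·f′(u² − R²) )·φ(u) du. -/
open MeasureTheory Filter

/-- The power series `f(y) = ∑ (−1)^n yⁿ / (16ⁿ (n!)²)`. -/
noncomputable def f (y : ℝ) : ℝ :=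
  ∑' n : ℕ, (-1 : ℝ) ^ n * y ^ n / (16 ^ n * (Nat.factorial n : ℝ) ^ 2)

/-- The isothermal entropy kernel
`χ♯(R,u) = (1/2)·sgn(R)·e^{R/2}·f(u² − R²)` for `|u| < |R|`, and `0` otherwise. -/
noncomputable def chiSharp (R u : ℝ) : ℝ :=
  if |u| < |R| then (1 / 2) * Real.sign R * Real.exp (R / 2) * f (u ^ 2 - R ^ 2) else 0

noncomputable def fc : ℕ → ℝ := fun n => (-1 : ℝ) ^ n / (16 ^ n * (Nat.factorial n : ℝ) ^ 2)

lemma f_eq_sum : f = FormalMultilinearSeries.ofScalarsSum fc := by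
  funext y
  rw [FormalMultilinearSeries.ofScalars_sum_eq]
  exact tsum_congr fun n => by rw [smul_eq_mul, fc]; ring

lemma norm_fc (n : ℕ) : ‖fc n‖ = 1 / (16 ^ n * (Nat.factorial n : ℝ) ^ 2) := by
  have h : (0:ℝ) < 16 ^ n * (Nat.factorial n : ℝ) ^ 2 := by positivity
  rw [fc, Real.norm_eq_abs, abs_div, abs_pow, abs_neg, abs_one, one_pow, abs_of_pos h]

lemma radius_top : (FormalMultilinearSeries.ofScalars ℝ fc).radius = ⊤ := by
  apply FormalMultilinearSeries.radius_eq_top_of_summable_norm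
  intro r
  apply Summable.of_nonneg_of_le (fun n => by positivity) (fun n => ?_)
    (Real.summable_pow_div_factorial r)
  rw [FormalMultilinearSeries.ofScalars_norm, norm_fc]
  have h1 : (Nat.factorial n : ℝ) ≤ 16 ^ n * (Nat.factorial n : ℝ) ^ 2 := by
    have h2 : (1:ℝ) ≤ 16 ^ n := one_le_pow₀ (by norm_num : (1:ℝ) ≤ 16)
    have h3 : (1:ℝ) ≤ (Nat.factorial n : ℝ) := by
      exact_mod_cast Nat.one_le_iff_ne_zero.mpr (Nat.factorial_ne_zero n)
    nlinarith
  calc (1:ℝ) / (16 ^ n * (Nat.factorial n : ℝ) ^ 2) * (r:ℝ) ^ n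
      = (r:ℝ) ^ n / (16 ^ n * (Nat.factorial n : ℝ) ^ 2) := by
        ring
    _ ≤ (r:ℝ) ^ n / (Nat.factorial n : ℝ) := by
        gcongr

lemma contDiff_f : ContDiff ℝ (⊤ : ℕ∞) f := by
  have h0 : 0 < (FormalMultilinearSeries.ofScalars ℝ fc).radius := by
    rw [radius_top]; exact ENNReal.zero_lt_top
  have hb := (FormalMultilinearSeries.ofScalars ℝ fc).hasFPowerSeriesOnBall h0
  have han := hb.analyticOnNhd
  rw [contDiff_iff_contDiffAt]
  intro x
  have hx : x ∈ EMetric.ball (0:ℝ) (FormalMultilinearSeries.ofScalars ℝ fc).radius := by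
    rw [radius_top]; exact EMetric.mem_ball.2 (edist_lt_top _ _)
  have := han x hx
  rw [f_eq_sum]
  exact this.contDiffAt

lemma f_zero : f 0 = 1 := by
  rw [show f 0 = ∑' n : ℕ, (-1 : ℝ) ^ n * (0:ℝ) ^ n / (16 ^ n * (Nat.factorial n : ℝ) ^ 2)
    from rfl]
  rw [tsum_eq_single 0 (fun n hn => by simp [zero_pow hn])]
  simp

lemma sign_integral (k : ℝ → ℝ) (hk : Continuous k) (x : ℝ) :
    Real.sign x * ∫ u in Set.Ioo (-|x|) |x|, k u = ∫ u in (-x)..x, k u := by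
  rcases lt_trichotomy x 0 with h | h | h
  · rw [Real.sign_of_neg h, abs_of_neg h, neg_neg,
      intervalIntegral.integral_symm x (-x),
      intervalIntegral.integral_of_le (by linarith : x ≤ -x),
      integral_Ioc_eq_integral_Ioo]
    ring
  · subst h; simp
  · rw [Real.sign_of_pos h, abs_of_pos h, one_mul,
      intervalIntegral.integral_of_le (by linarith : -x ≤ x),
      integral_Ioc_eq_integral_Ioo]

lemma key_moving {G : ℝ → ℝ → ℝ} {c C : ℝ}
    (hcont : Continuous fun p : ℝ × ℝ => G p.1 p.2)
    (hC : 0 ≤ C)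
    (hlip : ∀ u ∈ Set.Icc (c - 1) (c + 1), ∀ x ∈ Set.Icc (c - 1) (c + 1),
      |G u x - G u c| ≤ C * |x - c|) :
    HasDerivAt (fun x => ∫ u in c..x, G u x) (G c c) c := by
  have hGx : ∀ x : ℝ, Continuous fun u => G u x := fun x =>
    hcont.comp (continuous_id.prodMk continuous_const)
  have hA : HasDerivAt (fun x => ∫ u in c..x, G u c) (G c c) c :=
    intervalIntegral.integral_hasDerivAt_right ((hGx c).intervalIntegrable _ _)
      ((hGx c).stronglyMeasurableAtFilter _ _) (hGx c).continuousAt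
  have hE : HasDerivAt (fun x => ∫ u in c..x, (G u x - G u c)) 0 c := by
    rw [hasDerivAt_iff_isLittleO]
    simp only [intervalIntegral.integral_same, sub_zero, smul_zero]
    rw [Asymptotics.isLittleO_iff]
    intro ε hε
    have hδ : 0 < min 1 (ε / (C + 1)) := by positivity
    filter_upwards [Metric.ball_mem_nhds c hδ] with x hx
    have hxd : |x - c| < min 1 (ε / (C + 1)) := by
      simpa [Real.dist_eq] using hx
    have hx1 : |x - c| < 1 := lt_of_lt_of_le hxd (min_le_left _ _)
    have hx2 : |x - c| < ε / (C + 1) := lt_of_lt_of_le hxd (min_le_right _ _)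
    have hxabs := abs_lt.mp hx1
    have hbound : ∀ u ∈ Set.uIoc c x, ‖G u x - G u c‖ ≤ C * |x - c| := by
      intro u hu
      have h1 : min c x ≤ u ∧ u ≤ max c x := ⟨le_of_lt hu.1, hu.2⟩
      have hu1 : c - 1 ≤ u := le_trans (le_min (by linarith) (by linarith)) h1.1
      have hu2 : u ≤ c + 1 := le_trans h1.2 (max_le (by linarith) (by linarith))
      rw [Real.norm_eq_abs]
      exact hlip u ⟨hu1, hu2⟩ x ⟨by linarith, by linarith⟩
    have hnorm := intervalIntegral.norm_integral_le_of_norm_le_const hbound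
    calc ‖∫ u in c..x, (G u x - G u c)‖ ≤ C * |x - c| * |x - c| := hnorm
      _ ≤ ε * ‖x - c‖ := by
          rw [Real.norm_eq_abs]
          have h3 : C * |x - c| ≤ ε := by
            rcases le_or_gt C 0 with hC0 | hC0
            · nlinarith [abs_nonneg (x - c)]
            · have := (lt_div_iff₀ (by linarith : (0:ℝ) < C + 1)).mp hx2
              nlinarith [abs_nonneg (x - c)]
          nlinarith [abs_nonneg (x - c)]
  have hsplit : (fun x => ∫ u in c..x, G u x)
      = fun x => (∫ u in c..x, G u c) + ∫ u in c..x, (G u x - G u c) := by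
    funext x
    rw [← intervalIntegral.integral_add (f := fun u => G u c) (g := fun u => G u x - G u c)
      ((hGx c).intervalIntegrable _ _)
      (((hGx x).sub (hGx c)).intervalIntegrable _ _)]
    simp
  rw [hsplit]
  rw [← add_zero (G c c)]; exact hA.add hE

theorem stmt4 (φ : ℝ → ℝ) (hφ : ContDiff ℝ (⊤ : ℕ∞) φ) (hsupp : HasCompactSupport φ) (R : ℝ) :
    HasDerivAt (fun R' => ∫ u : ℝ, chiSharp R' u * φ u)
      ((1 / 2) * Real.exp (R / 2) * (φ R + φ (-R))
        + (1 / 2) * Real.sign R * Real.exp (R / 2) *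
          ∫ u in Set.Ioo (-|R|) |R|,
            ((1 / 2) * f (u ^ 2 - R ^ 2) - 2 * R * deriv f (u ^ 2 - R ^ 2)) * φ u) R := by
  have hfd : Differentiable ℝ f := contDiff_f.differentiable (by simp)
  have hfc : Continuous f := contDiff_f.continuous
  have hf'c : Continuous (deriv f) := contDiff_f.continuous_deriv (by simp)
  have hφc : Continuous φ := hφ.continuous
  have hpoly : Continuous fun p : ℝ × ℝ => p.1 ^ 2 - p.2 ^ 2 := by fun_prop
  have hkx : ∀ x : ℝ, Continuous fun u : ℝ => f (u ^ 2 - x ^ 2) * φ u := fun x =>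
    (hfc.comp (by fun_prop)).mul hφc
  have hderiv : ∀ (a : ℝ) (u b : ℝ),
      HasDerivAt (fun x : ℝ => f (u ^ 2 - x ^ 2) * a)
        (deriv f (u ^ 2 - b ^ 2) * (-(2 * b)) * a) b := by
    intro a u b
    have h1 : HasDerivAt (fun x : ℝ => u ^ 2 - x ^ 2) (-(2 * b)) b := by
      simpa using (hasDerivAt_pow 2 b).const_sub (u ^ 2)
    exact ((hfd _).hasDerivAt.comp b h1).mul_const a
  -- T1 : fixed endpoints, differentiate under the integral sign
  have hIK : IsCompact (Set.uIcc (-R) R ×ˢ Set.Icc (R - 1) (R + 1)) :=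
    isCompact_uIcc.prod isCompact_Icc
  have hg'C : Continuous fun p : ℝ × ℝ =>
      deriv f (p.1 ^ 2 - p.2 ^ 2) * (-(2 * p.2)) * φ p.1 :=
    ((hf'c.comp hpoly).mul (by fun_prop)).mul (hφc.comp continuous_fst)
  obtain ⟨C1, hC1⟩ := hIK.exists_bound_of_continuousOn hg'C.continuousOn
  have hF'x : ∀ x : ℝ, Continuous fun u : ℝ =>
      deriv f (u ^ 2 - x ^ 2) * (-(2 * x)) * φ u := fun x =>
    ((hf'c.comp (by fun_prop)).mul continuous_const).mul hφc
  have hT1 : HasDerivAt (fun x => ∫ u in (-R)..R, f (u ^ 2 - x ^ 2) * φ u)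
      (∫ u in (-R)..R, deriv f (u ^ 2 - R ^ 2) * (-(2 * R)) * φ u) R := by
    refine (intervalIntegral.hasDerivAt_integral_of_dominated_loc_of_deriv_le
      (F := fun x u => f (u ^ 2 - x ^ 2) * φ u)
      (F' := fun x u => deriv f (u ^ 2 - x ^ 2) * (-(2 * x)) * φ u)
      (bound := fun _ => C1) (Metric.ball_mem_nhds R one_pos)
      (Eventually.of_forall fun x => (hkx x).aestronglyMeasurable)
      ((hkx R).intervalIntegrable _ _)
      (hF'x R).aestronglyMeasurable
      (ae_of_all _ ?_) intervalIntegrable_const (ae_of_all _ ?_)).2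
    · intro u hu x hx
      have hx' : |x - R| < 1 := by simpa [Real.dist_eq] using hx
      have hx'' := abs_lt.mp hx'
      have hmem : (u, x) ∈ Set.uIcc (-R) R ×ˢ Set.Icc (R - 1) (R + 1) :=
        Set.mem_prod.mpr ⟨Set.uIoc_subset_uIcc hu,
          ⟨by linarith [hx''.1], by linarith [hx''.2]⟩⟩
      simpa using hC1 (u, x) hmem
    · intro u hu x hx
      exact hderiv (φ u) u x
  -- moving endpoints
  have hGcont : Continuous fun p : ℝ × ℝ =>
      f (p.1 ^ 2 - p.2 ^ 2) * (φ p.1 + φ (-p.1)) :=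
    (hfc.comp hpoly).mul ((hφc.comp continuous_fst).add (hφc.comp continuous_fst.neg))
  have hDcont : Continuous fun p : ℝ × ℝ =>
      deriv f (p.1 ^ 2 - p.2 ^ 2) * (-(2 * p.2)) * (φ p.1 + φ (-p.1)) :=
    ((hf'c.comp hpoly).mul (by fun_prop)).mul
      ((hφc.comp continuous_fst).add (hφc.comp continuous_fst.neg))
  have hK2 : IsCompact (Set.Icc (R - 1) (R + 1) ×ˢ Set.Icc (R - 1) (R + 1)) :=
    isCompact_Icc.prod isCompact_Icc
  obtain ⟨C2, hC2⟩ := hK2.exists_bound_of_continuousOn hDcont.continuousOn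
  have hRmem : R ∈ Set.Icc (R - 1) (R + 1) := ⟨by linarith, by linarith⟩
  have hC2n : 0 ≤ C2 :=
    le_trans (norm_nonneg _) (hC2 (R, R) (Set.mem_prod.mpr ⟨hRmem, hRmem⟩))
  have hlip : ∀ u ∈ Set.Icc (R - 1) (R + 1), ∀ x ∈ Set.Icc (R - 1) (R + 1),
      |f (u ^ 2 - x ^ 2) * (φ u + φ (-u)) - f (u ^ 2 - R ^ 2) * (φ u + φ (-u))|
        ≤ C2 * |x - R| := by
    intro u hu x hx
    have h := Convex.norm_image_sub_le_of_norm_hasDerivWithin_le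
      (f := fun y => f (u ^ 2 - y ^ 2) * (φ u + φ (-u)))
      (f' := fun y => deriv f (u ^ 2 - y ^ 2) * (-(2 * y)) * (φ u + φ (-u)))
      (fun y _ => (hderiv (φ u + φ (-u)) u y).hasDerivWithinAt)
      (fun y hy => hC2 (u, y) (Set.mem_prod.mpr ⟨hu, hy⟩))
      (convex_Icc _ _) hRmem hx
    simpa [Real.norm_eq_abs] using h
  have hT23 : HasDerivAt (fun x => ∫ u in R..x, f (u ^ 2 - x ^ 2) * (φ u + φ (-u)))
      (φ R + φ (-R)) R := by
    have h := key_moving (G := fun u x => f (u ^ 2 - x ^ 2) * (φ u + φ (-u)))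
      hGcont hC2n hlip
    simpa [f_zero] using h
  -- splitting identity
  have hHsplit : ∀ x : ℝ, (∫ u in (-x)..x, f (u ^ 2 - x ^ 2) * φ u)
      = (∫ u in (-R)..R, f (u ^ 2 - x ^ 2) * φ u)
        + ∫ u in R..x, f (u ^ 2 - x ^ 2) * (φ u + φ (-u)) := by
    intro x
    have hint : ∀ a b : ℝ, IntervalIntegrable (fun u => f (u ^ 2 - x ^ 2) * φ u) volume a b :=
      fun a b => (hkx x).intervalIntegrable a b
    have hintn : IntervalIntegrable (fun u => f (u ^ 2 - x ^ 2) * φ (-u)) volume R x :=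
      ((hfc.comp (by fun_prop)).mul (hφc.comp continuous_neg)).intervalIntegrable _ _
    have hneg : (∫ u in R..x, f (u ^ 2 - x ^ 2) * φ (-u))
        = ∫ u in (-x)..(-R), f (u ^ 2 - x ^ 2) * φ u := by
      have h := intervalIntegral.integral_comp_neg (a := R) (b := x)
        (f := fun u => f (u ^ 2 - x ^ 2) * φ u)
      simpa [neg_sq] using h
    have h1 : (∫ u in (-x)..(-R), f (u ^ 2 - x ^ 2) * φ u)
        + (∫ u in (-R)..x, f (u ^ 2 - x ^ 2) * φ u)
        = ∫ u in (-x)..x, f (u ^ 2 - x ^ 2) * φ u :=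
      intervalIntegral.integral_add_adjacent_intervals (hint _ _) (hint _ _)
    have h2 : (∫ u in (-R)..R, f (u ^ 2 - x ^ 2) * φ u)
        + (∫ u in R..x, f (u ^ 2 - x ^ 2) * φ u)
        = ∫ u in (-R)..x, f (u ^ 2 - x ^ 2) * φ u :=
      intervalIntegral.integral_add_adjacent_intervals (hint _ _) (hint _ _)
    have h3 : (∫ u in R..x, f (u ^ 2 - x ^ 2) * (φ u + φ (-u)))
        = (∫ u in R..x, f (u ^ 2 - x ^ 2) * φ u)
          + ∫ u in R..x, f (u ^ 2 - x ^ 2) * φ (-u) := by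
      rw [← intervalIntegral.integral_add (hint _ _) hintn]
      apply intervalIntegral.integral_congr
      intro u _
      ring
    linarith [h1, h2, h3, hneg]
  have hH : HasDerivAt (fun x => ∫ u in (-x)..x, f (u ^ 2 - x ^ 2) * φ u)
      ((∫ u in (-R)..R, deriv f (u ^ 2 - R ^ 2) * (-(2 * R)) * φ u) + (φ R + φ (-R))) R := by
    rw [show (fun x => ∫ u in (-x)..x, f (u ^ 2 - x ^ 2) * φ u)
        = fun x => (∫ u in (-R)..R, f (u ^ 2 - x ^ 2) * φ u)
          + ∫ u in R..x, f (u ^ 2 - x ^ 2) * (φ u + φ (-u)) from funext hHsplit]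
    exact hT1.add hT23
  have hexp : HasDerivAt (fun x : ℝ => Real.exp (x / 2)) (Real.exp (R / 2) * (1 / 2)) R := by
    have h2 : HasDerivAt (fun x : ℝ => x / 2) (1 / 2) R := by
      simpa using (hasDerivAt_id R).div_const 2
    exact (Real.hasDerivAt_exp (R / 2)).comp R h2
  have hmain : HasDerivAt
      (fun x => 1 / 2 * Real.exp (x / 2) * ∫ u in (-x)..x, f (u ^ 2 - x ^ 2) * φ u) _ R :=
    (hexp.const_mul (1 / 2 : ℝ)).mul hH
  -- representation of the full integral
  have hrepr : ∀ x : ℝ, (∫ u : ℝ, chiSharp x u * φ u)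
      = 1 / 2 * Real.exp (x / 2) * ∫ u in (-x)..x, f (u ^ 2 - x ^ 2) * φ u := by
    intro x
    have hind : (fun u => chiSharp x u * φ u)
        = Set.indicator (Set.Ioo (-|x|) |x|)
            (fun u => 1 / 2 * Real.sign x * Real.exp (x / 2) * (f (u ^ 2 - x ^ 2) * φ u)) := by
      funext u
      rw [Set.indicator_apply]
      simp only [chiSharp]
      by_cases h : |u| < |x|
      · rw [if_pos h, if_pos (by rw [Set.mem_Ioo]; exact abs_lt.mp h)]
        ring
      · rw [if_neg h, if_neg (by rw [Set.mem_Ioo]; exact fun hm => h (abs_lt.mpr hm)), zero_mul]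
    rw [hind, integral_indicator measurableSet_Ioo, integral_const_mul,
      ← sign_integral _ (hkx x) x]
    ring
  rw [show (fun R' => ∫ u : ℝ, chiSharp R' u * φ u)
      = fun x => 1 / 2 * Real.exp (x / 2) * ∫ u in (-x)..x, f (u ^ 2 - x ^ 2) * φ u
      from funext hrepr]
  convert hmain using 1
  have hk2 : Continuous fun u : ℝ =>
      ((1 : ℝ) / 2 * f (u ^ 2 - R ^ 2) - 2 * R * deriv f (u ^ 2 - R ^ 2)) * φ u := by
    apply Continuous.mul _ hφc
    exact (continuous_const.mul (hfc.comp (by fun_prop : Continuous fun u : ℝ => u ^ 2 - R ^ 2))).sub (continuous_const.mul (hf'c.comp (by fun_prop : Continuous fun u : ℝ => u ^ 2 - R ^ 2)))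
  have hs := sign_integral
    (fun u => ((1 : ℝ) / 2 * f (u ^ 2 - R ^ 2) - 2 * R * deriv f (u ^ 2 - R ^ 2)) * φ u) hk2 R
  have hJ : (∫ u in (-R)..R,
        ((1 : ℝ) / 2 * f (u ^ 2 - R ^ 2) - 2 * R * deriv f (u ^ 2 - R ^ 2)) * φ u)
      = 1 / 2 * (∫ u in (-R)..R, f (u ^ 2 - R ^ 2) * φ u)
        + ∫ u in (-R)..R, deriv f (u ^ 2 - R ^ 2) * (-(2 * R)) * φ u := by
    rw [← intervalIntegral.integral_const_mul,
      ← intervalIntegral.integral_add (f := fun u => (1 / 2 : ℝ) * (f (u ^ 2 - R ^ 2) * φ u))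
        (g := fun u => deriv f (u ^ 2 - R ^ 2) * (-(2 * R)) * φ u)
        ((continuous_const.mul (hkx R)).intervalIntegrable _ _)
        ((hF'x R).intervalIntegrable _ _)]
    apply intervalIntegral.integral_congr
    intro u _
    ring
  rw [hJ] at hs
  linear_combination (1 / 2 * Real.exp (R / 2)) * hs
end

section
/- There exists a constant C > 0 such that |χ♯(R,u)| ≤ C·e^{(R+|R|)/2}·(1 + |R|)^{−1/2} for all (R,u) ∈ ℝ². In particular, sup_{u∈ℝ} |χ♯(R,u)| → 0 as R → −∞. -/
open MeasureTheory Filter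

/-!
On `|u| < |R|` one has `|f (u² - R²)| ≤ I₀(|R|/2)`, where `I₀(x) = ∑ (x²/4)ⁿ/(n!)²` is the modified
Bessel function, so everything reduces to `I₀(x) ≤ 2eˣ/√(1+2x)` for `x ≥ 0`. The `n`-th term of `I₀`
is `x²ⁿ/(2n)! · C(2n,n)/4ⁿ`, and `(n+1)·C(2n,n)² ≤ 16ⁿ` gives, termwise,
`(n-th term)·√(1+2x) ≤ x²ⁿ/(2n)! + 2x²ⁿ⁺¹/(2n+1)!`; these sum to `cosh x + 2 sinh x ≤ 2eˣ`.
Hence the bound holds with `C = 1`, and for `R ≤ 0` it reads `|χ♯(R,u)| ≤ (1 - R)^(-1/2)`.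
-/

open Nat Real Topology

noncomputable def besselI0 (x : ℝ) : ℝ := ∑' n : ℕ, (x ^ 2 / 4) ^ n / (n ! : ℝ) ^ 2

theorem succ_mul_centralBinom_sq_le (n : ℕ) : (n + 1) * centralBinom n ^ 2 ≤ 16 ^ n := by
  induction n with
  | zero => simp
  | succ n ih =>
    have key : (n + 1) ^ 2 * ((n + 2) * centralBinom (n + 1) ^ 2) ≤ (n + 1) ^ 2 * 16 ^ (n + 1) :=
      calc (n + 1) ^ 2 * ((n + 2) * centralBinom (n + 1) ^ 2)
          = (n + 2) * ((n + 1) * centralBinom (n + 1)) ^ 2 := by ring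
        _ = 4 * ((n + 2) * (2 * n + 1) ^ 2) * centralBinom n ^ 2 := by
          rw [succ_mul_centralBinom_succ]; ring
        _ ≤ 4 * (4 * (n + 1) ^ 3) * centralBinom n ^ 2 := by
          gcongr 4 * ?_ * _; ring_nf; nlinarith
        _ = 16 * (n + 1) ^ 2 * ((n + 1) * centralBinom n ^ 2) := by ring
        _ ≤ 16 * (n + 1) ^ 2 * 16 ^ n := by gcongr
        _ = (n + 1) ^ 2 * 16 ^ (n + 1) := by ring
    exact Nat.le_of_mul_le_mul_left key (by positivity)

theorem centralBinom_div_four_pow_mul_sqrt_le {x : ℝ} (hx : 0 ≤ x) (n : ℕ) :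
    (centralBinom n / 4 ^ n : ℝ) * √(1 + 2 * x) ≤ 1 + 2 * x / (2 * n + 1) := by
  have hC : ((n : ℝ) + 1) * (centralBinom n : ℝ) ^ 2 ≤ 16 ^ n := by
    exact_mod_cast succ_mul_centralBinom_sq_le n
  have hsq : ((centralBinom n / 4 ^ n : ℝ) * √(1 + 2 * x)) ^ 2 ≤ (1 + 2 * x) / (n + 1) := by
    rw [mul_pow, div_pow, sq_sqrt (by linarith), ← pow_mul, show (4 : ℝ) ^ (n * 2) = 16 ^ n by
      rw [pow_mul']; norm_num, le_div_iff₀ (by positivity)]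
    calc (centralBinom n : ℝ) ^ 2 / 16 ^ n * (1 + 2 * x) * (n + 1)
        = ((n + 1) * (centralBinom n : ℝ) ^ 2) / 16 ^ n * (1 + 2 * x) := by ring
      _ ≤ 1 + 2 * x := by
        rw [div_mul_eq_mul_div, div_le_iff₀ (by positivity)]
        nlinarith
  have hrhs : (1 + 2 * x) / (n + 1) ≤ (1 + 2 * x / (2 * n + 1)) ^ 2 := by
    set t := 2 * x / (2 * n + 1) with ht
    have ht0 : 0 ≤ t := by positivity
    have hxt : 2 * x = t * (2 * n + 1) := by rw [ht]; field_simp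
    rw [div_le_iff₀ (by positivity), hxt]
    have hn : (0 : ℝ) ≤ n := n.cast_nonneg
    nlinarith [mul_nonneg ht0 hn, mul_nonneg (sq_nonneg t) hn]
  exact (pow_le_pow_iff_left₀ (by positivity) (by positivity) two_ne_zero).1 (hsq.trans hrhs)

theorem besselI0_term_eq (x : ℝ) (n : ℕ) :
    (x ^ 2 / 4) ^ n / (n ! : ℝ) ^ 2 = x ^ (2 * n) / (2 * n)! * (centralBinom n / 4 ^ n) := by
  have h := add_choose_mul_factorial_mul_factorial n n
  rw [← two_mul, ← centralBinom_eq_two_mul_choose] at h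
  have hC : (centralBinom n : ℝ) ≠ 0 := by exact_mod_cast centralBinom_ne_zero n
  rw [← h, div_pow, pow_mul]
  push_cast
  field_simp

theorem besselI0_term_mul_sqrt_le {x : ℝ} (hx : 0 ≤ x) (n : ℕ) :
    (x ^ 2 / 4) ^ n / (n ! : ℝ) ^ 2 * √(1 + 2 * x)
      ≤ x ^ (2 * n) / (2 * n)! + 2 * (x ^ (2 * n + 1) / (2 * n + 1)!) := by
  have hodd : x ^ (2 * n + 1) / ((2 * n + 1)! : ℝ)
      = x ^ (2 * n) / (2 * n)! * (x / (2 * n + 1)) := by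
    rw [factorial_succ, pow_succ]; push_cast; field_simp
  rw [besselI0_term_eq, hodd, mul_assoc]
  calc x ^ (2 * n) / (2 * n)! * ((centralBinom n / 4 ^ n : ℝ) * √(1 + 2 * x))
      ≤ x ^ (2 * n) / (2 * n)! * (1 + 2 * x / (2 * n + 1)) := by
        gcongr; exact centralBinom_div_four_pow_mul_sqrt_le hx n
    _ = _ := by ring

theorem summable_besselI0 (x : ℝ) : Summable fun n : ℕ => (x ^ 2 / 4) ^ n / (n ! : ℝ) ^ 2 := by
  refine (summable_pow_div_factorial (x ^ 2 / 4)).of_nonneg_of_le (fun n => by positivity)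
    fun n => div_le_div_of_nonneg_left (by positivity) (by positivity) ?_
  exact le_self_pow₀ (by exact_mod_cast factorial_pos n) two_ne_zero

theorem besselI0_le {x : ℝ} (hx : 0 ≤ x) : besselI0 x ≤ 2 * exp x / √(1 + 2 * x) := by
  have hsum := (hasSum_cosh x).add ((hasSum_sinh x).mul_left 2)
  have h : besselI0 x * √(1 + 2 * x) ≤ cosh x + 2 * sinh x := by
    rw [besselI0, ← tsum_mul_right]
    exact hasSum_le (besselI0_term_mul_sqrt_le hx) ((summable_besselI0 x).mul_right _).hasSum hsum
  rw [le_div_iff₀ (sqrt_pos.2 (by linarith))]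
  linarith [cosh_add_sinh x, cosh_pos x]

theorem abs_f_le_besselI0 {y s : ℝ} (h : |y| ≤ s ^ 2) : |f y| ≤ besselI0 (s / 2) := by
  have hterm : ∀ n : ℕ, ‖(-1 : ℝ) ^ n * y ^ n / (16 ^ n * (n ! : ℝ) ^ 2)‖
      ≤ ((s / 2) ^ 2 / 4) ^ n / (n ! : ℝ) ^ 2 := by
    intro n
    have hnorm : ‖(-1 : ℝ) ^ n * y ^ n / (16 ^ n * (n ! : ℝ) ^ 2)‖
        = |y| ^ n / 16 ^ n / (n ! : ℝ) ^ 2 := by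
      simp [div_div]
    rw [hnorm, show (s / 2) ^ 2 / 4 = s ^ 2 / 16 by ring, div_pow]
    gcongr
  have hsummable := (summable_besselI0 (s / 2)).of_nonneg_of_le (fun _ => norm_nonneg _) hterm
  calc |f y| ≤ ∑' n : ℕ, ‖(-1 : ℝ) ^ n * y ^ n / (16 ^ n * (n ! : ℝ) ^ 2)‖ :=
        norm_tsum_le_tsum_norm hsummable
    _ ≤ besselI0 (s / 2) := hsummable.tsum_le_tsum hterm (summable_besselI0 _)

theorem abs_chiSharp_le (R u : ℝ) :
    |chiSharp R u| ≤ exp ((R + |R|) / 2) * (1 + |R|) ^ (-(1 / 2) : ℝ) := by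
  unfold chiSharp
  split_ifs with h
  · have hy : |u ^ 2 - R ^ 2| ≤ |R| ^ 2 := by
      have := sq_lt_sq.2 h
      rw [sq_abs, abs_le]; constructor <;> nlinarith [sq_nonneg u]
    have hsign : |sign R| ≤ 1 := by
      rcases sign_apply_eq R with hR | hR | hR <;> simp [hR]
    have hI := besselI0_le (x := |R| / 2) (by positivity)
    rw [show 2 * (|R| / 2) = |R| by ring] at hI
    calc |1 / 2 * sign R * exp (R / 2) * f (u ^ 2 - R ^ 2)|
        = 1 / 2 * |sign R| * exp (R / 2) * |f (u ^ 2 - R ^ 2)| := by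
          rw [abs_mul, abs_mul, abs_mul, abs_exp, abs_of_pos (by norm_num : (0 : ℝ) < 1 / 2)]
      _ ≤ 1 / 2 * 1 * exp (R / 2) * (2 * exp (|R| / 2) / √(1 + |R|)) := by
          gcongr; exact (abs_f_le_besselI0 hy).trans hI
      _ = exp ((R + |R|) / 2) * (1 + |R|) ^ (-(1 / 2) : ℝ) := by
          rw [rpow_neg (by positivity), sqrt_eq_rpow, add_div, exp_add]; ring
  · rw [abs_zero]; positivity

theorem stmt8 :
    (∃ C > (0 : ℝ), ∀ R u : ℝ,
      |chiSharp R u| ≤ C * Real.exp ((R + |R|) / 2) * (1 + |R|) ^ (-(1 / 2) : ℝ)) ∧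
    Tendsto (fun R : ℝ => ⨆ u : ℝ, |chiSharp R u|) atBot (nhds 0) := by
  refine ⟨⟨1, one_pos, fun R u => by simpa using abs_chiSharp_le R u⟩, ?_⟩
  have hdecay : Tendsto (fun R : ℝ => (1 + |R|) ^ (-(1 / 2) : ℝ)) atBot (𝓝 0) :=
    (tendsto_rpow_neg_atTop (by norm_num)).comp
      (tendsto_atTop_add_const_left _ 1 tendsto_abs_atBot_atTop)
  refine tendsto_of_tendsto_of_tendsto_of_le_of_le' tendsto_const_nhds hdecay
    (Eventually.of_forall fun R => Real.iSup_nonneg fun u => abs_nonneg _) ?_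
  filter_upwards [eventually_le_atBot 0] with R hR
  refine Real.iSup_le (fun u => ?_) (by positivity)
  simpa [abs_of_nonpos hR] using abs_chiSharp_le R u
end

section
/- For every R > 0 and every compactly supported smooth function φ : ℝ → ℝ, one has −∫_ℝ χ♯(R,u)·φ′(u) du = (1/2)·e^{R/2}·( φ(−R) − φ(R) ) + ∫_{−R}^{R} e^{R/2}·u·f′(u² − R²)·φ(u) du; that is, the distributional u-derivative of χ♯(R,·) is the measure (1/2)·e^{R/2}·(δ_{u=−R} − δ_{u=R}) + e^{R/2}·u·f′(u² − R²)·1_{|u|<R} du. -/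
open MeasureTheory Filter

namespace StmtAux

/-- The coefficients of the series. -/
noncomputable def c (n : ℕ) : ℝ := (-1) ^ n / (16 ^ n * (Nat.factorial n : ℝ) ^ 2)

lemma c_ne_zero (n : ℕ) : c n ≠ 0 := by
  have h1 : ((-1 : ℝ)) ^ n ≠ 0 := pow_ne_zero _ (by norm_num)
  have h2 : ((16 : ℝ)) ^ n * (Nat.factorial n : ℝ) ^ 2 ≠ 0 := by
    positivity
  exact div_ne_zero h1 h2

lemma abs_c (n : ℕ) : |c n| = 1 / (16 ^ n * (Nat.factorial n : ℝ) ^ 2) := by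
  have h2 : (0:ℝ) < (16 : ℝ) ^ n * (Nat.factorial n : ℝ) ^ 2 := by positivity
  rw [c, abs_div, abs_pow, abs_neg, abs_one, one_pow, abs_of_pos h2]

lemma radius_top : (FormalMultilinearSeries.ofScalars ℝ c).radius = ⊤ := by
  apply FormalMultilinearSeries.ofScalars_radius_eq_top_of_tendsto
  · exact Filter.Eventually.of_forall fun n => c_ne_zero n
  · have key : ∀ n : ℕ, ‖c (n+1)‖ / ‖c n‖ = 1 / (16 * ((n:ℝ)+1)^2) := by
      intro n
      rw [Real.norm_eq_abs, Real.norm_eq_abs, abs_c, abs_c]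
      have h1 : (0:ℝ) < (16 : ℝ) ^ n * (Nat.factorial n : ℝ) ^ 2 := by positivity
      rw [Nat.factorial_succ]
      push_cast
      field_simp
      ring
    simp only [Nat.succ_eq_add_one]
    rw [show (fun n : ℕ => ‖c (n+1)‖ / ‖c n‖) = fun n : ℕ => 1 / (16 * ((n:ℝ)+1)^2) from
      funext key]
    have h1 : Filter.Tendsto (fun n : ℕ => 16 * ((n:ℝ)+1)^2) Filter.atTop Filter.atTop := by
      apply Filter.tendsto_atTop_mono (f := fun n : ℕ => (n : ℝ))
      · intro n
        nlinarith [sq_nonneg ((n:ℝ)+1), Nat.cast_nonneg (α := ℝ) n]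
      · exact tendsto_natCast_atTop_atTop
    have := h1.inv_tendsto_atTop
    apply this.congr
    intro n
    simp [one_div]

lemma f_eq_sum : f = (FormalMultilinearSeries.ofScalars ℝ c).sum := by
  funext y
  rw [show (FormalMultilinearSeries.ofScalars ℝ c).sum y
      = FormalMultilinearSeries.ofScalarsSum c y from rfl,
    FormalMultilinearSeries.ofScalars_sum_eq]
  unfold f
  apply tsum_congr
  intro n
  rw [smul_eq_mul, c]
  ring

lemma f_analytic : AnalyticOnNhd ℝ f Set.univ := by
  rw [f_eq_sum]
  have h := (FormalMultilinearSeries.ofScalars ℝ c).hasFPowerSeriesOnBall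
    (by rw [radius_top]; exact ENNReal.zero_lt_top)
  intro y _
  exact h.analyticAt_of_mem (by rw [radius_top]; simp)

lemma f_diff (y : ℝ) : DifferentiableAt ℝ f y :=
  (f_analytic y (Set.mem_univ y)).differentiableAt

lemma deriv_f_continuous : Continuous (deriv f) :=
  (f_analytic.deriv).continuous

lemma f_zero : f 0 = 1 := by
  unfold f
  rw [tsum_eq_single 0]
  · simp
  · intro n hn
    simp [zero_pow hn]

end StmtAux

theorem stmt12 (R : ℝ) (hR : 0 < R) (φ : ℝ → ℝ) (hφ : ContDiff ℝ (⊤ : ℕ∞) φ)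
    (hsupp : HasCompactSupport φ) :
    -(∫ u : ℝ, chiSharp R u * deriv φ u)
      = (1 / 2) * Real.exp (R / 2) * (φ (-R) - φ R)
        + ∫ u in (-R)..R, Real.exp (R / 2) * u * deriv f (u ^ 2 - R ^ 2) * φ u := by
  set E := Real.exp (R / 2) with hE
  set g : ℝ → ℝ := fun u => (1 / 2) * E * f (u ^ 2 - R ^ 2) with hg
  set g' : ℝ → ℝ := fun u => E * u * deriv f (u ^ 2 - R ^ 2) with hg'
  -- Step A: reduce the full-line integral to an interval integral
  have h0 : (∫ u : ℝ, chiSharp R u * deriv φ u)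
      = ∫ u in Set.Ioo (-R) R, chiSharp R u * deriv φ u := by
    refine (setIntegral_eq_integral_of_forall_compl_eq_zero fun u hu => ?_).symm
    have h1 : ¬ (|u| < |R|) := by
      rw [abs_of_pos hR, abs_lt]
      simp only [Set.mem_Ioo, not_and_or, not_lt] at hu ⊢
      rcases hu with h | h
      · exact Or.inl h
      · exact Or.inr h
    simp [chiSharp, if_neg h1]
  have h1 : (∫ u in Set.Ioo (-R) R, chiSharp R u * deriv φ u)
      = ∫ u in Set.Ioo (-R) R, g u * deriv φ u := by
    apply setIntegral_congr_fun measurableSet_Ioo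
    intro u hu
    have h1 : |u| < |R| := by
      rw [abs_of_pos hR, abs_lt]
      exact ⟨hu.1, hu.2⟩
    simp only [chiSharp, if_pos h1, Real.sign_of_pos hR, hg, hE]
    ring
  have h2 : (∫ u in (-R)..R, g u * deriv φ u)
      = ∫ u in Set.Ioo (-R) R, g u * deriv φ u := by
    rw [intervalIntegral.integral_of_le (by linarith : -R ≤ R),
      MeasureTheory.integral_Ioc_eq_integral_Ioo]
  have hA : (∫ u : ℝ, chiSharp R u * deriv φ u)
      = ∫ u in (-R)..R, g u * deriv φ u := by
    rw [h0, h1, h2]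
  -- Derivative of g
  have hgderiv : ∀ x ∈ Set.uIcc (-R) R, HasDerivAt g (g' x) x := by
    intro x _
    have h1 : HasDerivAt (fun u : ℝ => u ^ 2 - R ^ 2) (2 * x) x := by
      simpa using ((hasDerivAt_pow 2 x).sub_const (R ^ 2))
    have h2 : HasDerivAt f (deriv f (x ^ 2 - R ^ 2)) (x ^ 2 - R ^ 2) :=
      (StmtAux.f_diff _).hasDerivAt
    have h3 := (h2.comp x h1).const_mul ((1 : ℝ) / 2 * E)
    refine h3.congr_deriv ?_
    simp only [hg']
    ring
  have hφderiv : ∀ x ∈ Set.uIcc (-R) R, HasDerivAt φ (deriv φ x) x := fun x _ =>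
    (hφ.differentiable (by simp) x).hasDerivAt
  have hg'int : IntervalIntegrable g' volume (-R) R := by
    apply Continuous.intervalIntegrable
    exact (continuous_const.mul continuous_id).mul
      (StmtAux.deriv_f_continuous.comp ((continuous_pow 2).sub continuous_const))
  have hφ'int : IntervalIntegrable (deriv φ) volume (-R) R :=
    (hφ.continuous_deriv (by simp)).intervalIntegrable _ _
  have hIBP := intervalIntegral.integral_mul_deriv_eq_deriv_mul hgderiv hφderiv hg'int hφ'int
  have hgR : g R = 1 / 2 * E := by
    simp [hg, StmtAux.f_zero]
  have hgnR : g (-R) = 1 / 2 * E := by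
    simp [hg, StmtAux.f_zero]
  rw [hA, hIBP, hgR, hgnR]
  have hfinal : ∫ u in (-R)..R, E * u * deriv f (u ^ 2 - R ^ 2) * φ u
      = ∫ x in (-R)..R, g' x * φ x := by
    apply intervalIntegral.integral_congr
    intro x _
    simp [hg']
  rw [hfinal]
  ring
end

section
/- Let φ : ℝ → ℝ be smooth with support contained in [−1,1], let δ ∈ (0,1], and set φ^δ(x) := δ^{−1}·φ(x/δ). Then the integral (PV ∗ φ^δ)(x) := ∫_0^∞ ( φ^δ(x−y) − φ^δ(x+y) )/y dy converges absolutely for every x ∈ ℝ, and one has |(PV ∗ φ^δ)(x)| ≤ 8·‖φ′‖_∞ / δ whenever |x| ≤ 2δ, and |(PV ∗ φ^δ)(x)| ≤ 8·‖φ‖_∞ / |x| whenever |x| ≥ 2δ. -/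
open MeasureTheory Filter

theorem stmt16 (φ : ℝ → ℝ) (hφ : ContDiff ℝ (⊤ : ℕ∞) φ)
    (hsupp : Function.support φ ⊆ Set.Icc (-1 : ℝ) 1)
    (δ : ℝ) (hδ : δ ∈ Set.Ioc (0 : ℝ) 1) :
    (∀ x : ℝ, IntegrableOn
        (fun y => (δ⁻¹ * φ ((x - y) / δ) - δ⁻¹ * φ ((x + y) / δ)) / y) (Set.Ioi 0)) ∧
    (∀ x : ℝ, |x| ≤ 2 * δ →
      |∫ y in Set.Ioi (0 : ℝ), (δ⁻¹ * φ ((x - y) / δ) - δ⁻¹ * φ ((x + y) / δ)) / y|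
        ≤ 8 * (⨆ t : ℝ, |deriv φ t|) / δ) ∧
    (∀ x : ℝ, 2 * δ ≤ |x| →
      |∫ y in Set.Ioi (0 : ℝ), (δ⁻¹ * φ ((x - y) / δ) - δ⁻¹ * φ ((x + y) / δ)) / y|
        ≤ 8 * (⨆ t : ℝ, |φ t|) / |x|) := by
  have hδ0 : 0 < δ := hδ.1
  have hφc : Continuous φ := hφ.continuous
  have hcs : HasCompactSupport φ := HasCompactSupport.intro isCompact_Icc
    (fun x hx => Function.notMem_support.mp (fun hs => hx (hsupp hs)))
  have hdc : Continuous (deriv φ) := hφ.continuous_deriv (by simp)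
  have hdiff : ∀ t : ℝ, DifferentiableAt ℝ φ t := fun t => (hφ.differentiable (by simp)) t
  have hbdd0 : BddAbove (Set.range fun t => |φ t|) := by
    simpa only [Real.norm_eq_abs] using hφc.norm.bddAbove_range_of_hasCompactSupport hcs.norm
  have hbdd1 : BddAbove (Set.range fun t => |deriv φ t|) := by
    simpa only [Real.norm_eq_abs] using
      hdc.norm.bddAbove_range_of_hasCompactSupport hcs.deriv.norm
  set M0 := ⨆ t : ℝ, |φ t| with hM0def
  set M1 := ⨆ t : ℝ, |deriv φ t| with hM1def
  have hM0 : ∀ t, |φ t| ≤ M0 := fun t => le_ciSup hbdd0 t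
  have hM1 : ∀ t, |deriv φ t| ≤ M1 := fun t => le_ciSup hbdd1 t
  have hM0n : 0 ≤ M0 := (abs_nonneg _).trans (hM0 0)
  have hM1n : 0 ≤ M1 := (abs_nonneg _).trans (hM1 0)
  have hlip : ∀ a b : ℝ, |φ a - φ b| ≤ M1 * |a - b| := fun a b => by
    simpa only [Real.norm_eq_abs] using
      convex_univ.norm_image_sub_le_of_norm_deriv_le (fun t _ => hdiff t)
        (fun t _ => by simpa only [Real.norm_eq_abs] using hM1 t) (Set.mem_univ b) (Set.mem_univ a)
  have hz : ∀ t : ℝ, 1 < |t| → φ t = 0 := by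
    intro t ht
    by_contra h
    have := abs_le.mpr (Set.mem_Icc.mp (hsupp (Function.mem_support.mpr h)))
    linarith
  have hzδ : ∀ s : ℝ, δ < |s| → φ (s / δ) = 0 := by
    intro s hs
    apply hz
    rw [abs_div, abs_of_pos hδ0]
    exact (one_lt_div hδ0).mpr hs
  set F : ℝ → ℝ → ℝ :=
    fun x y => (δ⁻¹ * φ ((x - y) / δ) - δ⁻¹ * φ ((x + y) / δ)) / y with hFdef
  have hmeas : ∀ x : ℝ, Measurable (F x) := by
    intro x
    have hcont : Continuous (fun y => δ⁻¹ * φ ((x - y) / δ) - δ⁻¹ * φ ((x + y) / δ)) := by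
      fun_prop
    exact hcont.measurable.div measurable_id
  -- pointwise Lipschitz bound
  have hboundA : ∀ x : ℝ, ∀ y ∈ Set.Ioi (0 : ℝ), |F x y| ≤ 2 * M1 / δ ^ 2 := by
    intro x y hy
    rw [Set.mem_Ioi] at hy
    have hnum : |δ⁻¹ * φ ((x - y) / δ) - δ⁻¹ * φ ((x + y) / δ)| ≤ 2 * M1 / δ ^ 2 * y := by
      have h1 : |δ⁻¹ * φ ((x - y) / δ) - δ⁻¹ * φ ((x + y) / δ)|
          = δ⁻¹ * |φ ((x - y) / δ) - φ ((x + y) / δ)| := by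
        rw [← mul_sub, abs_mul, abs_of_pos (inv_pos.mpr hδ0)]
      have h2 : |φ ((x - y) / δ) - φ ((x + y) / δ)| ≤ M1 * (2 * y / δ) := by
        have := hlip ((x - y) / δ) ((x + y) / δ)
        have h3 : |(x - y) / δ - (x + y) / δ| = 2 * y / δ := by
          rw [div_sub_div_same]
          rw [show x - y - (x + y) = -(2 * y) by ring, abs_div, abs_neg,
            abs_of_pos (by linarith : (0:ℝ) < 2 * y), abs_of_pos hδ0]
        rw [h3] at this
        exact this
      calc |δ⁻¹ * φ ((x - y) / δ) - δ⁻¹ * φ ((x + y) / δ)|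
          = δ⁻¹ * |φ ((x - y) / δ) - φ ((x + y) / δ)| := h1
        _ ≤ δ⁻¹ * (M1 * (2 * y / δ)) := by
            exact mul_le_mul_of_nonneg_left h2 (le_of_lt (inv_pos.mpr hδ0))
        _ = 2 * M1 / δ ^ 2 * y := by field_simp
    rw [hFdef]
    simp only [abs_div, abs_of_pos hy]
    rw [div_le_iff₀ hy]
    exact hnum
  -- generic crude bound
  have hboundB : ∀ x : ℝ, ∀ y : ℝ, 0 < y →
      |F x y| ≤ 2 * M0 / δ / y := by
    intro x y hy
    have hnum : |δ⁻¹ * φ ((x - y) / δ) - δ⁻¹ * φ ((x + y) / δ)| ≤ 2 * M0 / δ := by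
      calc |δ⁻¹ * φ ((x - y) / δ) - δ⁻¹ * φ ((x + y) / δ)|
          ≤ |δ⁻¹ * φ ((x - y) / δ)| + |δ⁻¹ * φ ((x + y) / δ)| := abs_sub _ _
        _ = δ⁻¹ * |φ ((x - y) / δ)| + δ⁻¹ * |φ ((x + y) / δ)| := by
            rw [abs_mul, abs_mul, abs_of_pos (inv_pos.mpr hδ0)]
        _ ≤ δ⁻¹ * M0 + δ⁻¹ * M0 := by
            have h0 : (0:ℝ) ≤ δ⁻¹ := le_of_lt (inv_pos.mpr hδ0)
            gcongr
            · exact hM0 _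
            · exact hM0 _
        _ = 2 * M0 / δ := by field_simp; ring
    rw [hFdef]
    simp only [abs_div, abs_of_pos hy]
    gcongr
  -- tail vanishing
  have hvan : ∀ x y : ℝ, |x| + δ < y → F x y = 0 := by
    intro x y hxy
    have hy : 0 < y := lt_of_le_of_lt (by positivity) hxy
    have h1 : δ < |x - y| := by
      have := abs_sub_abs_le_abs_sub y x
      rw [abs_of_pos hy] at this
      rw [abs_sub_comm]
      linarith [abs_nonneg x]
    have h2 : δ < |x + y| := by
      have := abs_sub_abs_le_abs_sub y (-x)
      rw [abs_of_pos hy, abs_neg, sub_neg_eq_add] at this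
      rw [add_comm]
      linarith
    rw [hFdef]
    simp only [hzδ _ h1, hzδ _ h2, mul_zero, sub_zero, zero_div, sub_self]
  -- integrability
  have hint : ∀ x : ℝ, IntegrableOn (F x) (Set.Ioi 0) := by
    intro x
    set R := |x| + δ with hRdef
    have hR0 : 0 < R := by positivity
    have h1 : IntegrableOn (F x) (Set.Ioc 0 R) := by
      apply Integrable.mono' (g := fun _ => 2 * M1 / δ ^ 2)
        (integrableOn_const measure_Ioc_lt_top.ne)
        ((hmeas x).aestronglyMeasurable)
      refine (ae_restrict_iff' measurableSet_Ioc).mpr (Eventually.of_forall fun y hy => ?_)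
      simpa only [Real.norm_eq_abs] using hboundA x y hy.1
    have h2 : IntegrableOn (F x) (Set.Ioi R) := by
      apply (integrableOn_congr_fun (fun y hy => (hvan x y hy).symm) measurableSet_Ioi).mp
      exact integrableOn_zero
    have := h1.union h2
    rwa [Set.Ioc_union_Ioi_eq_Ioi (le_of_lt hR0)] at this
  refine ⟨hint, ?_, ?_⟩
  · -- near bound
    intro x hx
    set R := |x| + δ with hRdef
    have hR0 : 0 < R := by positivity
    have heq : ∫ y in Set.Ioi (0:ℝ), F x y = ∫ y in Set.Ioc 0 R, F x y := by
      apply setIntegral_eq_of_subset_of_forall_diff_eq_zero measurableSet_Ioi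
        Set.Ioc_subset_Ioi_self
      intro y hy
      rcases hy with ⟨hy1, hy2⟩
      rw [Set.mem_Ioi] at hy1
      apply hvan
      simp only [Set.mem_Ioc, not_and, not_le] at hy2
      exact hy2 hy1
    rw [heq]
    have hb := norm_setIntegral_le_of_norm_le_const (μ := volume) (s := Set.Ioc 0 R)
      (f := F x) measure_Ioc_lt_top
      (fun y hy => by simpa only [Real.norm_eq_abs] using hboundA x y hy.1)
    rw [Real.volume_real_Ioc_of_le (by linarith)] at hb
    rw [Real.norm_eq_abs] at hb
    calc |∫ y in Set.Ioc 0 R, F x y| ≤ 2 * M1 / δ ^ 2 * (R - 0) := hb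
      _ ≤ 8 * M1 / δ := by
          rw [sub_zero, hRdef, div_mul_eq_mul_div, div_le_div_iff₀ (by positivity) hδ0]
          nlinarith [mul_nonneg (mul_nonneg hM1n hδ0.le) (sub_nonneg.mpr hx), hδ0, hM1n,
            abs_nonneg x, sq_nonneg δ]
  · -- far bound
    intro x hx
    have hxne : 0 < |x| := by linarith
    -- key computation given vanishing outside Icc (|x| - δ) (|x| + δ)
    have key : (∀ y ∈ Set.Ioi (0:ℝ) \ Set.Icc (|x| - δ) (|x| + δ), F x y = 0) →
        |∫ y in Set.Ioi (0:ℝ), F x y| ≤ 8 * M0 / |x| := by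
      intro hv
      have hsub : Set.Icc (|x| - δ) (|x| + δ) ⊆ Set.Ioi (0:ℝ) := by
        intro y hy
        rcases hy with ⟨hy1, _⟩
        have : 0 < |x| - δ := by linarith
        exact Set.mem_Ioi.mpr (lt_of_lt_of_le this hy1)
      have heq : ∫ y in Set.Ioi (0:ℝ), F x y = ∫ y in Set.Icc (|x| - δ) (|x| + δ), F x y :=
        setIntegral_eq_of_subset_of_forall_diff_eq_zero measurableSet_Ioi hsub hv
      rw [heq]
      have hb := norm_setIntegral_le_of_norm_le_const (μ := volume)
        (s := Set.Icc (|x| - δ) (|x| + δ)) (f := F x) measure_Icc_lt_top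
        (C := 2 * M0 / δ / (|x| / 2)) (fun y hy => ?_)
      · rw [Real.volume_real_Icc_of_le (by linarith), Real.norm_eq_abs] at hb
        have hδne : δ ≠ 0 := ne_of_gt hδ0
        have hxne' : |x| ≠ 0 := ne_of_gt hxne
        calc |∫ y in Set.Icc (|x| - δ) (|x| + δ), F x y|
            ≤ 2 * M0 / δ / (|x| / 2) * (|x| + δ - (|x| - δ)) := hb
          _ = 8 * M0 / |x| := by
              rw [show |x| + δ - (|x| - δ) = 2 * δ by ring]
              field_simp
              try ring
      · rcases hy with ⟨hy1, _⟩
        have hy0 : 0 < y := Set.mem_Ioi.mp (hsub ⟨hy1, by linarith [hy1]⟩)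
        have h1 : |x| / 2 ≤ y := le_trans (by linarith) hy1
        rw [Real.norm_eq_abs]
        calc |F x y| ≤ 2 * M0 / δ / y := hboundB x y hy0
          _ ≤ 2 * M0 / δ / (|x| / 2) := by
              apply div_le_div_of_nonneg_left (by positivity) (by positivity) h1
    -- now the two sign cases
    rcases le_or_gt 0 x with hxs | hxs
    · have hax : |x| = x := abs_of_nonneg hxs
      have hx0 : 0 < x := hax ▸ hxne
      have hx2 : 2 * δ ≤ x := hax ▸ hx
      apply key
      rintro y ⟨hy1, hy2⟩
      rw [Set.mem_Ioi] at hy1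
      rw [hax, Set.mem_Icc, not_and_or, not_le, not_le] at hy2
      have hz1 : φ ((x - y) / δ) = 0 := by
        apply hzδ
        rcases hy2 with h | h
        · exact lt_abs.mpr (Or.inl (by linarith))
        · exact lt_abs.mpr (Or.inr (by linarith))
      have hz2 : φ ((x + y) / δ) = 0 := by
        apply hzδ
        exact lt_abs.mpr (Or.inl (by linarith))
      rw [hFdef]
      simp only [hz1, hz2, mul_zero, sub_self, zero_div]
    · have hax : |x| = -x := abs_of_neg hxs
      have hx2 : x ≤ -(2 * δ) := by linarith [hax ▸ hx]
      apply key
      rintro y ⟨hy1, hy2⟩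
      rw [Set.mem_Ioi] at hy1
      rw [hax, Set.mem_Icc, not_and_or, not_le, not_le] at hy2
      have hz1 : φ ((x - y) / δ) = 0 := by
        apply hzδ
        exact lt_abs.mpr (Or.inr (by linarith))
      have hz2 : φ ((x + y) / δ) = 0 := by
        apply hzδ
        rcases hy2 with h | h
        · exact lt_abs.mpr (Or.inr (by linarith))
        · exact lt_abs.mpr (Or.inl (by linarith))
      rw [hFdef]
      simp only [hz1, hz2, mul_zero, sub_self, zero_div]
end
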